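/- Let (Ω, P) be a probability space, M ≥ 1 an integer, and X_1, …, X_M : Ω → ℝ random variables with 0 ≤ X_i ≤ 1 almost surely. Then E[∏_{i=1}^{M} (1/2 + X_i/2)] ≤ 2^{-M} + (1/2) ∑_{i=1}^{M} E[X_i]. (No independence of the X_i is required.) -/
import Mathlib


open MeasureTheory

lemma pointwise_prod_bound {ι : Type*} (s : Finset ι) (x : ι → ℝ)
    (h : ∀ i ∈ s, 0 ≤ x i ∧ x i ≤ 1) :
    ∏ i ∈ s, (1 / 2 + x i / 2) ≤ (2 : ℝ) ^ (-(s.card : ℤ)) + (1 / 2) * ∑ i ∈ s, x i := by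
  classical
  revert h
  induction s using Finset.induction_on with
  | empty => simp
  | @insert a s ha ih =>
    intro hins
    have hx := hins a (Finset.mem_insert_self a _)
    have h' : ∀ i ∈ s, 0 ≤ x i ∧ x i ≤ 1 := fun i hi => hins i (Finset.mem_insert_of_mem hi)
    have ihs := ih h'
    have hprod_le_one : ∏ i ∈ s, (1 / 2 + x i / 2) ≤ 1 := by
      apply Finset.prod_le_one
      · intro i hi; have := h' i hi; linarith [this.1]
      · intro i hi; have := h' i hi; linarith [this.2]
    have hprod_nonneg : (0:ℝ) ≤ ∏ i ∈ s, (1 / 2 + x i / 2) :=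
      Finset.prod_nonneg (fun i hi => by have := h' i hi; linarith [this.1])
    rw [Finset.prod_insert ha, Finset.sum_insert ha, Finset.card_insert_of_notMem ha]
    have key : (1 / 2 + x a / 2) * ∏ i ∈ s, (1 / 2 + x i / 2)
        ≤ (1/2) * ((2 : ℝ) ^ (-(s.card : ℤ)) + (1 / 2) * ∑ i ∈ s, x i) + (x a / 2) * 1 := by
      have h1 : (1/2 : ℝ) * ∏ i ∈ s, (1 / 2 + x i / 2)
          ≤ (1/2) * ((2 : ℝ) ^ (-(s.card : ℤ)) + (1 / 2) * ∑ i ∈ s, x i) := by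
        linarith
      have h2 : (x a / 2) * ∏ i ∈ s, (1 / 2 + x i / 2) ≤ (x a / 2) * 1 := by
        apply mul_le_mul_of_nonneg_left hprod_le_one (by linarith [hx.1])
      nlinarith
    have hpow : ((2:ℝ) ^ (-((s.card : ℤ) + 1))) = (1/2) * (2:ℝ) ^ (-(s.card : ℤ)) := by
      rw [neg_add, zpow_add₀ (by norm_num : (2:ℝ) ≠ 0)]
      norm_num
      ring
    push_cast
    calc (1 / 2 + x a / 2) * ∏ i ∈ s, (1 / 2 + x i / 2)
        ≤ (1/2) * ((2 : ℝ) ^ (-(s.card : ℤ)) + (1 / 2) * ∑ i ∈ s, x i) + (x a / 2) * 1 := key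
      _ ≤ (2:ℝ) ^ (-((s.card : ℤ) + 1)) + 1 / 2 * (x a + ∑ i ∈ s, x i) := by
          rw [hpow]
          have hsum : (0:ℝ) ≤ ∑ i ∈ s, x i :=
            Finset.sum_nonneg (fun i hi => (h' i hi).1)
          ring_nf
          nlinarith

/-- For random variables `X 1, …, X M` on a probability space with
`0 ≤ X i ≤ 1` almost surely (no independence required),
`E[∏ i, (1/2 + X i / 2)] ≤ 2^{-M} + (1/2) ∑ i, E[X i]`. -/
theorem expected_product_swap_test_bound
    {Ω : Type*} [MeasurableSpace Ω] (P : Measure Ω) [IsProbabilityMeasure P]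
    (M : ℕ) (hM : 1 ≤ M) (X : Fin M → Ω → ℝ)
    (hmeas : ∀ i, Measurable (X i))
    (hbound : ∀ i, ∀ᵐ ω ∂P, 0 ≤ X i ω ∧ X i ω ≤ 1) :
    ∫ ω, ∏ i, (1 / 2 + X i ω / 2) ∂P ≤
      (2 : ℝ) ^ (-(M : ℤ)) + (1 / 2) * ∑ i, ∫ ω, X i ω ∂P := by
  have hboundall : ∀ᵐ ω ∂P, ∀ i, 0 ≤ X i ω ∧ X i ω ≤ 1 := ae_all_iff.mpr hbound
  have hXint : ∀ i, Integrable (X i) P := by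
    intro i
    refine Integrable.mono' (integrable_const 1) (hmeas i).aestronglyMeasurable ?_
    filter_upwards [hbound i] with ω hω
    rw [Real.norm_eq_abs, abs_le]; constructor <;> linarith [hω.1, hω.2]
  have hfmeas : Measurable (fun ω => ∏ i, (1 / 2 + X i ω / 2)) := by
    exact Finset.measurable_prod _ fun i _ => (measurable_const.add ((hmeas i).div_const 2))
  have hfint : Integrable (fun ω => ∏ i, (1 / 2 + X i ω / 2)) P := by
    refine Integrable.mono' (integrable_const 1) hfmeas.aestronglyMeasurable ?_
    filter_upwards [hboundall] with ω hω
    rw [Real.norm_eq_abs, abs_le]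
    constructor
    · have : (0:ℝ) ≤ ∏ i, (1 / 2 + X i ω / 2) :=
        Finset.prod_nonneg (fun i _ => by linarith [(hω i).1])
      linarith
    · apply Finset.prod_le_one
      · intro i _; linarith [(hω i).1]
      · intro i _; linarith [(hω i).2]
  have hgint : Integrable (fun ω => (2 : ℝ) ^ (-(M : ℤ)) + (1 / 2) * ∑ i, X i ω) P := by
    exact (integrable_const _).add ((integrable_finset_sum _ fun i _ => hXint i).const_mul _)
  have hmono : ∫ ω, ∏ i, (1 / 2 + X i ω / 2) ∂P ≤
      ∫ ω, ((2 : ℝ) ^ (-(M : ℤ)) + (1 / 2) * ∑ i, X i ω) ∂P := by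
    apply integral_mono_ae hfint hgint
    filter_upwards [hboundall] with ω hω
    have := pointwise_prod_bound Finset.univ (fun i => X i ω) (fun i _ => hω i)
    simpa using this
  calc ∫ ω, ∏ i, (1 / 2 + X i ω / 2) ∂P
      ≤ ∫ ω, ((2 : ℝ) ^ (-(M : ℤ)) + (1 / 2) * ∑ i, X i ω) ∂P := hmono
    _ = (2 : ℝ) ^ (-(M : ℤ)) + (1 / 2) * ∑ i, ∫ ω, X i ω ∂P := by
        rw [integral_add (integrable_const _)
          ((integrable_finset_sum _ fun i _ => hXint i).const_mul _),
          integral_const, integral_const_mul, integral_finset_sum _ fun i _ => hXint i]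
        simp
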